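/- Let x, y, z ∈ ℝⁿ and suppose the triple [x,y,z] is F-right-angled in z. Then: (1) for every natural number p, letting d_{φ_p}(u,v) := (Σ_{i∈[n]} (u_i^{2p+1} − v_i^{2p+1})²)^{1/(2(2p+1))}, one has d_{φ_p}(x,y)² = ( (d_{φ_p}(x,z)²)^{2p+1} + (d_{φ_p}(y,z)²)^{2p+1} )^{1/(2p+1)}; and (2) d_⊞(x,y) = max{d_⊞(x,z), d_⊞(y,z)}. -/

import Mathlib

open Filter Finset

/-- The binary idempotent operation `⊞`. -/
noncomputable def bop (a b : ℝ) : ℝ :=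
  if |b| < |a| then a else if |a| < |b| then b else (a + b) / 2

/-- The unique real `(2p+1)`-th root of `t`. -/
noncomputable def oddRoot (p : ℕ) (t : ℝ) : ℝ :=
  Real.sign t * |t| ^ ((1 : ℝ) / (2 * (p : ℝ) + 1))

/-- `ξ_I[u](α) = Card{i ∈ I : u i = α} − Card{i ∈ I : u i = −α}`. -/
noncomputable def xiMap {ι : Type*} (I : Finset ι) (u : ι → ℝ) (α : ℝ) : ℤ :=
  ((I.filter fun i => u i = α).card : ℤ) - ((I.filter fun i => u i = -α).card : ℤ)

/-- The residual index set `J_I(u)`. -/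
noncomputable def resid {ι : Type*} (I : Finset ι) (u : ι → ℝ) : Finset ι :=
  I.filter fun i => xiMap I u (u i) ≠ 0

/-- The `n`-ary extension `⊞_{i ∈ I} u i` of the binary operation `⊞`. -/
noncomputable def Fop {ι : Type*} (I : Finset ι) (u : ι → ℝ) : ℝ :=
  if h : (resid I u).Nonempty then
    if 0 < xiMap I u ((resid I u).sup' h fun i => |u i|) then (resid I u).sup' h u
    else if xiMap I u ((resid I u).sup' h fun i => |u i|) < 0 then (resid I u).inf' h u
    else 0
  else 0

/-- The Chebyshev norm `max_{i ∈ [n]} |x i|`. -/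
noncomputable def chebNorm {n : ℕ} (x : Fin n → ℝ) : ℝ := ⨆ i, |x i|

/-- The ultrametric distance `d_⊞(x,y) = max_i |x_i ⊟ y_i|`. -/
noncomputable def dB {n : ℕ} (x y : Fin n → ℝ) : ℝ := ⨆ i, |bop (x i) (-(y i))|

/-- The 4n-ary value `⟨⟨x,y,z⟩⟩_∞` used for F-right angles. -/
noncomputable def rightAngleVal {n : ℕ} (x y z : Fin n → ℝ) : ℝ :=
  Fop (Finset.univ : Finset ((Fin n ⊕ Fin n) ⊕ (Fin n ⊕ Fin n)))
    (Sum.elim (Sum.elim (fun i => x i * y i) (fun i => -(x i * z i)))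
              (Sum.elim (fun i => -(y i * z i)) (fun i => z i ^ 2)))

/-- The generalized distance `d_{φ_p}`. -/
noncomputable def dphi (p : ℕ) {n : ℕ} (u v : Fin n → ℝ) : ℝ :=
  (∑ i, (u i ^ (2 * p + 1) - v i ^ (2 * p + 1)) ^ 2)
    ^ ((1 : ℝ) / (2 * (2 * (p : ℝ) + 1)))

/-! An F-right angle means that the entries of the `4n`-tuple `(x_i y_i, -x_i z_i, -y_i z_i, z_i²)`
cancel in pairs `α, -α` (the residual set `J` is empty), so every odd power sum of them vanishes.
For `q = 2p+1` that power sum is `∑ (x_i^q - z_i^q)(y_i^q - z_i^q)`, the cross term of a Pythagorean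
identity for `S_q(u,v) = ∑ (u_i^q - v_i^q)²`, and `d_{φ_p} = S_q^{1/(2q)}`.
Since `|a^q - b^q|^{1/q} → |a ⊟ b|`, the distance `d_⊞` is the limit of `S_q^{1/(2q)}` as `q → ∞`;
the identity gives `S_q(x,z), S_q(y,z) ≤ S_q(x,y)`, hence `d_⊞(x,z), d_⊞(y,z) ≤ d_⊞(x,y)`, and the
ultrametric inequality gives the converse. -/

section SignedCancellation

variable {ι : Type*} (I : Finset ι) (u : ι → ℝ)

lemma xiMap_neg (α : ℝ) : xiMap I u (-α) = -xiMap I u α := by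
  simp only [xiMap, neg_neg, neg_sub]

lemma xiMap_zero : xiMap I u 0 = 0 := by
  simp only [xiMap, neg_zero, sub_self]

lemma xiMap_eq_count_sub_count (α : ℝ) :
    xiMap I u α = (I.val.map u).count α - (I.val.map u).count (-α) := by
  classical
  simp only [xiMap, Multiset.count_map, Finset.card_def, Finset.filter_val, eq_comm]

variable {I u}

lemma exists_mem_resid_eq_of_xiMap_pos {α : ℝ} (h : 0 < xiMap I u α) :
    ∃ j ∈ resid I u, u j = α := by
  have hcard : 0 < (I.filter fun i => u i = α).card := by
    unfold xiMap at h
    omega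
  obtain ⟨j, hj⟩ := Finset.card_pos.mp hcard
  obtain ⟨hjI, rfl⟩ := Finset.mem_filter.mp hj
  exact ⟨j, Finset.mem_filter.mpr ⟨hjI, h.ne'⟩, rfl⟩

lemma Fop_ne_zero_of_resid_nonempty (hJ : (resid I u).Nonempty) : Fop I u ≠ 0 := by
  obtain ⟨k, hk, hkM⟩ := Finset.exists_mem_eq_sup' hJ fun i => |u i|
  set M := (resid I u).sup' hJ fun i => |u i|
  have hξk : xiMap I u (u k) ≠ 0 := (Finset.mem_filter.mp hk).2
  have hξM : xiMap I u M ≠ 0 := by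
    rcases abs_choice (u k) with h | h <;> rw [hkM, h]
    · exact hξk
    · rwa [xiMap_neg, neg_ne_zero]
  have hM : 0 < M := by
    rw [hkM, abs_pos]
    rintro h0
    exact hξk (h0 ▸ xiMap_zero I u)
  unfold Fop
  rw [dif_pos hJ]
  rcases hξM.lt_or_gt with hneg | hpos
  · rw [if_neg hneg.not_gt, if_pos hneg]
    have hpos : 0 < xiMap I u (-M) := by
      rw [xiMap_neg]
      omega
    obtain ⟨j, hj, hju⟩ := exists_mem_resid_eq_of_xiMap_pos hpos
    have := Finset.inf'_le u hj
    linarith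
  · rw [if_pos hpos]
    obtain ⟨j, hj, hju⟩ := exists_mem_resid_eq_of_xiMap_pos hpos
    have := Finset.le_sup' u hj
    linarith

lemma xiMap_eq_zero_of_Fop_eq_zero (h : Fop I u = 0) : ∀ i ∈ I, xiMap I u (u i) = 0 := by
  have hJ : resid I u = ∅ :=
    Finset.not_nonempty_iff_eq_empty.mp fun hJ => Fop_ne_zero_of_resid_nonempty hJ h
  simpa [resid, Finset.filter_eq_empty_iff] using hJ

lemma map_neg_eq_of_xiMap_eq_zero (h : ∀ i ∈ I, xiMap I u (u i) = 0) :
    (I.val.map u).map Neg.neg = I.val.map u := by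
  classical
  have hcount : ∀ α ∈ I.val.map u, (I.val.map u).count α = (I.val.map u).count (-α) := by
    intro α hα
    obtain ⟨i, hi, rfl⟩ := Multiset.mem_map.mp hα
    have := h i hi
    rw [xiMap_eq_count_sub_count] at this
    omega
  ext α
  rw [← neg_neg α, Multiset.count_map_eq_count' _ _ neg_injective, neg_neg]
  by_cases hα : α ∈ I.val.map u
  · exact (hcount α hα).symm
  by_cases hα' : -α ∈ I.val.map u
  · simpa using hcount (-α) hα'
  rw [Multiset.count_eq_zero_of_notMem hα, Multiset.count_eq_zero_of_notMem hα']

lemma sum_comp_eq_zero_of_Fop_eq_zero (h : Fop I u = 0) {f : ℝ → ℝ} (hf : ∀ t, f (-t) = -f t) :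
    ∑ i ∈ I, f (u i) = 0 := by
  have hsymm := map_neg_eq_of_xiMap_eq_zero (xiMap_eq_zero_of_Fop_eq_zero h)
  have hsum : ∑ i ∈ I, f (u i) = ((I.val.map u).map f).sum := by
    rw [Multiset.map_map]
    rfl
  have : ((I.val.map u).map f).sum = -((I.val.map u).map f).sum := by
    conv_lhs => rw [← hsymm]
    rw [Multiset.map_map, Function.comp_def]
    simp only [hf, Multiset.sum_map_neg]
  rw [hsum]
  linarith

end SignedCancellation

section Pythagoras

variable {n : ℕ}

def sumSqPowSub (k : ℕ) (u v : Fin n → ℝ) : ℝ := ∑ i, (u i ^ k - v i ^ k) ^ 2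

lemma sumSqPowSub_nonneg (k : ℕ) (u v : Fin n → ℝ) : 0 ≤ sumSqPowSub k u v :=
  Finset.sum_nonneg fun _ _ => sq_nonneg _

variable {x y z : Fin n → ℝ}

/-- For odd `q`, `(x y)^q + (-x z)^q + (-y z)^q + (z^2)^q = (x^q - z^q) (y^q - z^q)`. -/
lemma sum_pow_sub_mul_pow_sub_eq_zero (h : rightAngleVal x y z = 0) (p : ℕ) :
    ∑ i, (x i ^ (2 * p + 1) - z i ^ (2 * p + 1)) * (y i ^ (2 * p + 1) - z i ^ (2 * p + 1)) = 0 := by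
  have hodd : Odd (2 * p + 1) := odd_two_mul_add_one p
  have h0 := sum_comp_eq_zero_of_Fop_eq_zero h (f := (· ^ (2 * p + 1))) hodd.neg_pow
  simp only [Fintype.sum_sum_type, Sum.elim_inl, Sum.elim_inr, hodd.neg_pow,
    ← Finset.sum_add_distrib] at h0
  rw [← h0]
  exact Finset.sum_congr rfl fun i _ => by ring

lemma sumSqPowSub_eq_add_of_rightAngleVal_eq_zero (h : rightAngleVal x y z = 0) (p : ℕ) :
    sumSqPowSub (2 * p + 1) x y = sumSqPowSub (2 * p + 1) x z + sumSqPowSub (2 * p + 1) y z := by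
  have hpolar : sumSqPowSub (2 * p + 1) x z + sumSqPowSub (2 * p + 1) y z
      - sumSqPowSub (2 * p + 1) x y
      = 2 * ∑ i, (x i ^ (2 * p + 1) - z i ^ (2 * p + 1)) *
          (y i ^ (2 * p + 1) - z i ^ (2 * p + 1)) := by
    simp only [sumSqPowSub, Finset.mul_sum, ← Finset.sum_add_distrib, ← Finset.sum_sub_distrib]
    exact Finset.sum_congr rfl fun i _ => by ring
  rw [sum_pow_sub_mul_pow_sub_eq_zero h p, mul_zero, sub_eq_zero] at hpolar
  exact hpolar.symm

end Pythagoras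

lemma rpow_one_div_pow {S : ℝ} (hS : 0 ≤ S) (p : ℕ) :
    (S ^ ((1 : ℝ) / (2 * p + 1))) ^ (2 * p + 1) = S := by
  rw [one_div, show (2 * (p : ℝ) + 1) = ((2 * p + 1 : ℕ) : ℝ) by push_cast; ring]
  exact Real.rpow_inv_natCast_pow hS (by omega)

lemma oddRoot_of_nonneg {t : ℝ} (ht : 0 ≤ t) (p : ℕ) :
    oddRoot p t = t ^ ((1 : ℝ) / (2 * p + 1)) := by
  rcases ht.eq_or_lt with rfl | hpos
  · rw [Real.zero_rpow (by positivity), oddRoot, Real.sign_zero, zero_mul]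
  · rw [oddRoot, Real.sign_of_pos hpos, abs_of_pos hpos, one_mul]

lemma dphi_sq (p : ℕ) {n : ℕ} (u v : Fin n → ℝ) :
    dphi p u v ^ 2 = sumSqPowSub (2 * p + 1) u v ^ ((1 : ℝ) / (2 * p + 1)) := by
  change (sumSqPowSub (2 * p + 1) u v ^ _) ^ 2 = _
  rw [← Real.rpow_natCast, ← Real.rpow_mul (sumSqPowSub_nonneg _ u v)]
  congr 1
  push_cast
  field_simp

lemma abs_bop_neg (a b : ℝ) : |bop a (-b)| = if a = b then 0 else max |a| |b| := by
  unfold bop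
  rw [abs_neg]
  split_ifs with h1 hab h2 hab hab
  · exact absurd (hab ▸ h1) (lt_irrefl _)
  · exact (max_eq_left h1.le).symm
  · exact absurd (hab ▸ h2) (lt_irrefl _)
  · rw [abs_neg, max_eq_right h2.le]
  · simp [hab]
  · obtain rfl : a = -b :=
      (abs_eq_abs.mp (le_antisymm (not_lt.mp h1) (not_lt.mp h2))).resolve_left hab
    rw [abs_neg, max_self, show (-b + -b) / 2 = -b by ring, abs_neg]

lemma abs_bop_neg_le_max (a b c : ℝ) : |bop a (-b)| ≤ max |bop a (-c)| |bop b (-c)| := by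
  simp only [abs_bop_neg]
  split_ifs <;> subst_vars <;> grind [abs_nonneg]

lemma abs_pow_sub_pow_le_two_mul (a b : ℝ) (k : ℕ) : |a ^ k - b ^ k| ≤ 2 * |bop a (-b)| ^ k := by
  rw [abs_bop_neg]
  split_ifs with hab
  · simp [hab]
  calc |a ^ k - b ^ k| ≤ |a| ^ k + |b| ^ k := by
        simpa only [abs_pow] using abs_sub (a ^ k) (b ^ k)
    _ ≤ max |a| |b| ^ k + max |a| |b| ^ k := by gcongr <;> simp
    _ = 2 * max |a| |b| ^ k := by ring

/-- For `a = -b` only the oddness of the exponent keeps `a ^ q - b ^ q` from vanishing. -/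
lemma exists_lt_max_pow_sub_pow_le {a b : ℝ} (hab : a ≠ b) :
    ∃ c, 0 ≤ c ∧ c < max |a| |b| ∧
      ∀ p : ℕ, max |a| |b| ^ (2 * p + 1) - c ^ (2 * p + 1) ≤
        |a ^ (2 * p + 1) - b ^ (2 * p + 1)| := by
  have hrev : ∀ (s t : ℝ) (p : ℕ),
      |s| ^ (2 * p + 1) - |t| ^ (2 * p + 1) ≤ |s ^ (2 * p + 1) - t ^ (2 * p + 1)| := fun s t p => by
    simpa only [abs_pow] using abs_sub_abs_le_abs_sub (s ^ (2 * p + 1)) (t ^ (2 * p + 1))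
  rcases lt_trichotomy |a| |b| with hlt | heq | hgt
  · refine ⟨|a|, abs_nonneg a, by rwa [max_eq_right hlt.le], fun p => ?_⟩
    rw [max_eq_right hlt.le, abs_sub_comm]
    exact hrev b a p
  · obtain rfl : a = -b := (abs_eq_abs.mp heq).resolve_left hab
    have hb : 0 < |b| := abs_pos.mpr fun hb => hab (by simp [hb])
    refine ⟨0, le_rfl, by simpa using hb, fun p => ?_⟩
    rw [(odd_two_mul_add_one p).neg_pow, abs_neg, max_self, zero_pow (by omega), sub_zero,
      ← neg_add', abs_neg, ← two_mul, abs_mul, abs_pow, abs_two]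
    linarith [pow_nonneg (abs_nonneg b) (2 * p + 1)]
  · exact ⟨|b|, abs_nonneg b, by rwa [max_eq_left hgt.le], fun p => by
      rw [max_eq_left hgt.le]; exact hrev a b p⟩

section UltrametricDistance

variable {n : ℕ}

lemma dB_nonneg (u v : Fin n → ℝ) : 0 ≤ dB u v :=
  Real.iSup_nonneg fun _ => abs_nonneg _

lemma abs_bop_le_dB (u v : Fin n → ℝ) (i : Fin n) : |bop (u i) (-(v i))| ≤ dB u v :=
  le_ciSup (f := fun i => |bop (u i) (-(v i))|) (Set.finite_range _).bddAbove i

lemma dB_le_max (u v w : Fin n → ℝ) : dB u v ≤ max (dB u w) (dB v w) :=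
  Real.iSup_le (fun i => (abs_bop_neg_le_max _ _ (w i)).trans
      (max_le_max (abs_bop_le_dB u w i) (abs_bop_le_dB v w i)))
    ((dB_nonneg u w).trans (le_max_left _ _))

lemma exists_abs_bop_eq_dB {u v : Fin n → ℝ} (h : 0 < dB u v) :
    ∃ j, |bop (u j) (-(v j))| = dB u v := by
  have : Nonempty (Fin n) := by
    by_contra hn
    have : IsEmpty (Fin n) := not_nonempty_iff.mp hn
    simp [dB, Real.iSup_of_isEmpty] at h
  exact exists_eq_ciSup_of_finite

lemma sumSqPowSub_le (k : ℕ) (u v : Fin n → ℝ) : sumSqPowSub k u v ≤ n * (2 * dB u v ^ k) ^ 2 := by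
  have hterm : ∀ i, |u i ^ k - v i ^ k| ≤ 2 * dB u v ^ k := fun i =>
    (abs_pow_sub_pow_le_two_mul _ _ k).trans (by gcongr; exact abs_bop_le_dB u v i)
  calc sumSqPowSub k u v ≤ ∑ _i : Fin n, (2 * dB u v ^ k) ^ 2 :=
        Finset.sum_le_sum fun i _ => by
          rw [← sq_abs]; exact pow_le_pow_left₀ (abs_nonneg _) (hterm i) 2
    _ = n * (2 * dB u v ^ k) ^ 2 := by simp

lemma exists_lt_dB_forall_le_sumSqPowSub {u v : Fin n → ℝ} (h : 0 < dB u v) :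
    ∃ c, 0 ≤ c ∧ c < dB u v ∧
      ∀ p : ℕ, (dB u v ^ (2 * p + 1) - c ^ (2 * p + 1)) ^ 2 ≤ sumSqPowSub (2 * p + 1) u v := by
  obtain ⟨j, hj⟩ := exists_abs_bop_eq_dB h
  have hne : u j ≠ v j := fun he => by
    rw [abs_bop_neg, if_pos he] at hj
    linarith
  rw [abs_bop_neg, if_neg hne] at hj
  obtain ⟨c, hc0, hcD, hc⟩ := exists_lt_max_pow_sub_pow_le hne
  rw [hj] at hcD hc
  refine ⟨c, hc0, hcD, fun p => ?_⟩
  calc (dB u v ^ (2 * p + 1) - c ^ (2 * p + 1)) ^ 2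
        ≤ (u j ^ (2 * p + 1) - v j ^ (2 * p + 1)) ^ 2 := by
          rw [← sq_abs (u j ^ _ - _)]
          exact pow_le_pow_left₀ (sub_nonneg.mpr (pow_le_pow_left₀ hc0 hcD.le _)) (hc p) 2
    _ ≤ sumSqPowSub (2 * p + 1) u v :=
        Finset.single_le_sum (f := fun i => (u i ^ (2 * p + 1) - v i ^ (2 * p + 1)) ^ 2)
          (fun _ _ => sq_nonneg _) (Finset.mem_univ j)

lemma le_of_forall_pow_le_mul_pow {a b C : ℝ} {k : ℕ → ℕ} (hk : Tendsto k atTop atTop)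
    (ha : 0 ≤ a) (h : ∀ p, b ^ k p ≤ C * a ^ k p) : b ≤ a := by
  by_contra! hab
  have hb : 0 < b := ha.trans_lt hab
  have hlim : Tendsto (fun p => C * (a / b) ^ k p) atTop (nhds 0) := by
    simpa using ((tendsto_pow_atTop_nhds_zero_of_lt_one (div_nonneg ha hb.le)
      ((div_lt_one hb).mpr hab)).comp hk).const_mul C
  obtain ⟨p, hp⟩ := (hlim.eventually_lt_const one_pos).exists
  have hbp : 0 < b ^ k p := pow_pos hb _
  have : b ^ k p ≤ C * (a / b) ^ k p * b ^ k p := by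
    rw [div_pow, mul_assoc, div_mul_cancel₀ _ hbp.ne']
    exact h p
  nlinarith

lemma dB_le_of_forall_sumSqPowSub_le {u v u' v' : Fin n → ℝ}
    (h : ∀ p : ℕ, sumSqPowSub (2 * p + 1) u v ≤ sumSqPowSub (2 * p + 1) u' v') :
    dB u v ≤ dB u' v' := by
  rcases (dB_nonneg u v).eq_or_lt with h0 | hpos
  · rw [← h0]
    exact dB_nonneg u' v'
  obtain ⟨c, hc0, hcD, hc⟩ := exists_lt_dB_forall_le_sumSqPowSub hpos
  suffices dB u v ≤ max c (dB u' v') from (le_max_iff.mp this).resolve_left hcD.not_ge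
  have hk : Tendsto (fun p : ℕ => 2 * p + 1) atTop atTop :=
    tendsto_atTop_mono (fun p => (by omega : p ≤ 2 * p + 1)) tendsto_id
  refine le_of_forall_pow_le_mul_pow (C := 1 + 2 * n) hk (hc0.trans (le_max_left _ _)) fun p => ?_
  set q := 2 * p + 1
  have hn : (n : ℝ) ≤ (n : ℝ) ^ 2 := by exact_mod_cast Nat.le_self_pow two_ne_zero n
  have hsq : (dB u v ^ q - c ^ q) ^ 2 ≤ (2 * n * dB u' v' ^ q) ^ 2 :=
    (hc p).trans <| (h p).trans <| (sumSqPowSub_le q u' v').trans <| by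
      nlinarith [mul_le_mul_of_nonneg_right hn (sq_nonneg (dB u' v' ^ q))]
  have hdiff := (le_abs_self _).trans <|
    abs_le_of_sq_le_sq hsq (mul_nonneg (by positivity) (pow_nonneg (dB_nonneg u' v') q))
  calc dB u v ^ q ≤ c ^ q + 2 * n * dB u' v' ^ q := by linarith
    _ ≤ max c (dB u' v') ^ q + 2 * n * max c (dB u' v') ^ q := by
        gcongr <;> simp [dB_nonneg]
    _ = (1 + 2 * n) * max c (dB u' v') ^ q := by ring

end UltrametricDistance

/-- the idempotent Pythagorean theorem. -/
theorem stmt14 (n : ℕ) (x y z : Fin n → ℝ) (h : rightAngleVal x y z = 0) :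
    (∀ p : ℕ, dphi p x y ^ 2 =
      oddRoot p ((dphi p x z ^ 2) ^ (2 * p + 1) + (dphi p y z ^ 2) ^ (2 * p + 1))) ∧
    dB x y = max (dB x z) (dB y z) := by
  have hpyth := sumSqPowSub_eq_add_of_rightAngleVal_eq_zero h
  refine ⟨fun p => ?_, le_antisymm (dB_le_max x y z) (max_le ?_ ?_)⟩
  · rw [dphi_sq, dphi_sq, dphi_sq, rpow_one_div_pow (sumSqPowSub_nonneg _ x z),
      rpow_one_div_pow (sumSqPowSub_nonneg _ y z), ← hpyth p,
      oddRoot_of_nonneg (sumSqPowSub_nonneg _ x y)]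
  · exact dB_le_of_forall_sumSqPowSub_le fun p =>
      (hpyth p).symm ▸ le_add_of_nonneg_right (sumSqPowSub_nonneg _ y z)
  · exact dB_le_of_forall_sumSqPowSub_le fun p =>
      (hpyth p).symm ▸ le_add_of_nonneg_left (sumSqPowSub_nonneg _ x z)
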